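/- arXiv:1911.07079 — 3 statements merged into one kernel-verified Lean document; each statement's English description precedes it below -/
import Mathlib

section
/- If h : X → Y is semi-α-continuous, then for every subset D ⊆ Y, interior(closure(interior(closure(h⁻¹(D))))) ⊆ h⁻¹(closure(D)). -/
def IsSemiAlphaOpen {X : Type*} [TopologicalSpace X] (A : Set X) : Prop :=
  A ⊆ closure (interior (closure (interior A)))

theorem IsSemiAlphaOpen.interior_closure_interior_closure_compl_subset {X : Type*}
    [TopologicalSpace X] {A : Set X} (hA : IsSemiAlphaOpen A) :
    interior (closure (interior (closure Aᶜ))) ⊆ Aᶜ := by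
  rw [closure_compl, interior_compl, closure_compl, interior_compl]
  exact Set.compl_subset_compl.mpr hA

theorem stmt_5 {X Y : Type*} [TopologicalSpace X] [TopologicalSpace Y] (h : X → Y)
    (hc : ∀ U : Set Y, IsOpen U → h ⁻¹' U ⊆ closure (interior (closure (interior (h ⁻¹' U)))))
    (D : Set Y) :
    interior (closure (interior (closure (h ⁻¹' D)))) ⊆ h ⁻¹' (closure D) := by
  have hcompl : IsSemiAlphaOpen (h ⁻¹' closure D)ᶜ := hc _ isClosed_closure.isOpen_compl
  calc interior (closure (interior (closure (h ⁻¹' D))))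
      ⊆ interior (closure (interior (closure (h ⁻¹' closure D)))) := by
        gcongr; exact subset_closure
    _ ⊆ h ⁻¹' closure D := by
        simpa only [compl_compl] using hcompl.interior_closure_interior_closure_compl_subset
end

section
/- If interior(closure(interior(closure(h⁻¹(D))))) ⊆ h⁻¹(closure(D)) holds for every subset D ⊆ Y, then h : X → Y is semi-α-continuous. -/
open Set

theorem compl_interior_closure_interior_closure {X : Type*} [TopologicalSpace X] (s : Set X) :
    (interior (closure (interior (closure s))))ᶜ = closure (interior (closure (interior sᶜ))) := by
  simp only [← closure_compl, ← interior_compl]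

theorem stmt_6 {X Y : Type*} [TopologicalSpace X] [TopologicalSpace Y] (h : X → Y)
    (hc : ∀ D : Set Y, interior (closure (interior (closure (h ⁻¹' D)))) ⊆ h ⁻¹' (closure D)) :
    ∀ U : Set Y, IsOpen U → h ⁻¹' U ⊆ closure (interior (closure (interior (h ⁻¹' U)))) := by
  intro U hU
  have hUc : interior (closure (interior (closure (h ⁻¹' U)ᶜ))) ⊆ (h ⁻¹' U)ᶜ := by
    simpa only [hU.isClosed_compl.closure_eq, preimage_compl] using hc Uᶜ
  simpa only [compl_compl, compl_interior_closure_interior_closure] using compl_subset_compl.mpr hUc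
end

section
/- If h : X → Y is α*-continuous, open, and bijective, then h is semi-α*-continuous, i.e., the preimage of every semi-α-open set in Y is semi-α-open in X. -/
theorem stmt_11_general {X Y : Type*} [TopologicalSpace X] [TopologicalSpace Y] (h : X → Y)
    (hstar : ∀ D : Set Y, D ⊆ interior (closure (interior D)) →
      h ⁻¹' D ⊆ interior (closure (interior (h ⁻¹' D))))
    (hopen : ∀ U : Set X, IsOpen U → IsOpen (h '' U)) :
    ∀ A : Set Y, (∃ P : Set Y, P ⊆ interior (closure (interior P)) ∧ P ⊆ A ∧ A ⊆ closure P) →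
      ∃ Q : Set X, Q ⊆ interior (closure (interior Q)) ∧ Q ⊆ h ⁻¹' A ∧
        h ⁻¹' A ⊆ closure Q := by
  rintro A ⟨P, hP, hPA, hAP⟩
  have hh : IsOpenMap h := hopen
  exact ⟨h ⁻¹' P, hstar P hP, Set.preimage_mono hPA,
    (Set.preimage_mono hAP).trans hh.preimage_closure_subset_closure_preimage⟩

theorem stmt_11 {X Y : Type*} [TopologicalSpace X] [TopologicalSpace Y] (h : X → Y)
    (hstar : ∀ D : Set Y, D ⊆ interior (closure (interior D)) →
      h ⁻¹' D ⊆ interior (closure (interior (h ⁻¹' D))))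
    (hopen : ∀ U : Set X, IsOpen U → IsOpen (h '' U))
    (hbij : Function.Bijective h) :
    ∀ A : Set Y, (∃ P : Set Y, P ⊆ interior (closure (interior P)) ∧ P ⊆ A ∧ A ⊆ closure P) →
      ∃ Q : Set X, Q ⊆ interior (closure (interior Q)) ∧ Q ⊆ h ⁻¹' A ∧
        h ⁻¹' A ⊆ closure Q :=
  stmt_11_general h hstar hopen
end
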